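/- Let δ > 0 and let G be a finite Borel measure on [0,∞) with G((δ,∞)) = 0. Then there exists a constant C > 0, depending only on δ and G([0,δ]), such that for every integer L ≥ 2, Σ_{l=L}^∞ (2l+1)·C_l ≤ (C/Γ(L − 1/2)²)·(δ/2)^{2L}. -/

import Mathlib

open MeasureTheory Real Set

/-- Bessel function of the first kind of real order `ν`, via its power series
(with real powers; for `ν > 0` this gives `besselJ ν 0 = 0`). -/
noncomputable def besselJ (ν x : ℝ) : ℝ :=
  ∑' n : ℕ, ((-1 : ℝ) ^ n / (n.factorial * Real.Gamma ((n : ℝ) + ν + 1))) *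
    (x / 2) ^ (2 * (n : ℝ) + ν)

/-- The integrand `J_{l+1/2}(μ)² / μ`, with its value at `μ = 0` defined by
continuous extension (`2/π` for `l = 0`, `0` for `l ≥ 1`). -/
noncomputable def besselInt (l : ℕ) (μ : ℝ) : ℝ :=
  if μ = 0 then (if l = 0 then 2 / Real.pi else 0)
  else besselJ ((l : ℝ) + 1 / 2) μ ^ 2 / μ

/-- Angular power spectrum `C_l = C_l(0,0) = 2π² ∫ J_{l+1/2}(μ)²/μ G(dμ)` of the
initial random condition. -/
noncomputable def Cl0 (G : MeasureTheory.Measure ℝ) (l : ℕ) : ℝ :=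
  2 * Real.pi ^ 2 * ∫ μ in Set.Ici (0 : ℝ), besselInt l μ ∂G

/-!
Bounding the Bessel series termwise by `(x/2)^ν / Γ(ν+1) · ((x/2)²)ⁿ / n!` gives
`|J_ν(x)| ≤ (x/2)^ν e^{(x/2)²} / Γ(ν+1)`, so on the support `[0, δ]` of `G` the integrand of `C_l`
is at most `(δ/2)^{2l} e^{2(δ/2)²} / Γ(l+3/2)²`. With `x = L - 1/2`, the Gamma inequality
`2(x+k+1) Γ(x)² k! ≤ Γ(x+k+2)²` dominates the tail term `(2(L+k)+1) C_{L+k}` by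
`(δ/2)^{2L} / Γ(L-1/2)²` times the exponential-series term `((δ/2)²)^k / k!`, whose sum is
`e^{(δ/2)²}`.
-/

open scoped Nat

namespace Real

lemma hasSum_pow_div_factorial_exp (x : ℝ) : HasSum (fun n : ℕ ↦ x ^ n / n !) (exp x) := by
  rw [exp_eq_exp_ℝ]
  exact NormedSpace.expSeries_div_hasSum_exp x

lemma Gamma_mul_factorial_le_Gamma_add {x : ℝ} (hx : 1 ≤ x) (m : ℕ) :
    Gamma x * m ! ≤ Gamma (x + m) := by
  induction m with
  | zero => simp
  | succ n ih =>
    have hpos : 0 < x + n := by positivity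
    calc Gamma x * (n + 1)! = (n + 1) * (Gamma x * n !) := by
          push_cast [Nat.factorial_succ]; ring
      _ ≤ (x + n) * Gamma (x + n) := mul_le_mul (by linarith) ih (by positivity) hpos.le
      _ = Gamma (x + (n + 1 : ℕ)) := by
        rw [← Gamma_add_one hpos.ne']
        push_cast
        ring_nf

lemma two_mul_div_Gamma_sq_le {x : ℝ} (hx : 1 ≤ x) (k : ℕ) :
    2 * (x + k + 1) / Gamma (x + k + 2) ^ 2 ≤ 1 / (Gamma x ^ 2 * k !) := by
  have hΓ : (x + k + 1) * (Gamma x * (k + 1)!) ≤ Gamma (x + k + 2) := by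
    rw [show x + k + 2 = (x + (k + 1 : ℕ)) + 1 by push_cast; ring, Gamma_add_one (by positivity),
      show x + k + 1 = x + (k + 1 : ℕ) by push_cast; ring]
    exact mul_le_mul_of_nonneg_left (Gamma_mul_factorial_le_Gamma_add hx (k + 1)) (by positivity)
  have hk : (k ! : ℝ) ≤ (k + 1)! ^ 2 := by
    exact_mod_cast (Nat.factorial_le k.le_succ).trans (Nat.le_self_pow two_ne_zero _)
  rw [div_le_div_iff₀ (by positivity) (by positivity), one_mul]
  calc 2 * (x + k + 1) * (Gamma x ^ 2 * k !)
      ≤ (x + k + 1) ^ 2 * (Gamma x ^ 2 * (k + 1)! ^ 2) := by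
        gcongr
        nlinarith
    _ = ((x + k + 1) * (Gamma x * (k + 1)!)) ^ 2 := by ring
    _ ≤ Gamma (x + k + 2) ^ 2 := by gcongr

end Real

lemma abs_besselJ_term_le {ν x : ℝ} (hν : 0 ≤ ν) (hx : 0 < x) (n : ℕ) :
    |(-1) ^ n / (n ! * Gamma (n + ν + 1)) * (x / 2) ^ (2 * (n : ℝ) + ν)|
      ≤ (x / 2) ^ ν / Gamma (ν + 1) * (((x / 2) ^ 2) ^ n / n !) := by
  have hx2 : 0 < x / 2 := by positivity
  have hfac : (1 : ℝ) ≤ n ! := by exact_mod_cast Nat.one_le_iff_ne_zero.mpr n.factorial_ne_zero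
  have hΓn : Gamma (ν + 1) * n ! ≤ n ! * Gamma (n + ν + 1) := by
    calc Gamma (ν + 1) * n ! ≤ Gamma (n + ν + 1) := by
          rw [show (n : ℝ) + ν + 1 = ν + 1 + n by ring]
          exact Real.Gamma_mul_factorial_le_Gamma_add (by linarith) n
      _ ≤ n ! * Gamma (n + ν + 1) := le_mul_of_one_le_left (by positivity) hfac
  have hpow : (x / 2) ^ (2 * (n : ℝ) + ν) = ((x / 2) ^ 2) ^ n * (x / 2) ^ ν := by
    rw [rpow_add hx2, ← pow_mul, ← rpow_natCast]
    push_cast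
    ring_nf
  rw [abs_mul, abs_div, abs_pow, abs_neg, abs_one, one_pow, abs_of_pos (by positivity),
    abs_of_pos (by positivity), hpow]
  calc 1 / (n ! * Gamma (n + ν + 1)) * (((x / 2) ^ 2) ^ n * (x / 2) ^ ν)
      ≤ 1 / (Gamma (ν + 1) * n !) * (((x / 2) ^ 2) ^ n * (x / 2) ^ ν) := by gcongr
    _ = (x / 2) ^ ν / Gamma (ν + 1) * (((x / 2) ^ 2) ^ n / n !) := by field_simp

lemma abs_besselJ_le {ν x : ℝ} (hν : 0 ≤ ν) (hx : 0 < x) :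
    |besselJ ν x| ≤ (x / 2) ^ ν / Gamma (ν + 1) * exp ((x / 2) ^ 2) :=
  show ‖besselJ ν x‖ ≤ _ from
    tsum_of_norm_bounded ((Real.hasSum_pow_div_factorial_exp _).mul_left _)
      (abs_besselJ_term_le hν hx)

lemma besselJ_sq_div_le (l : ℕ) {x : ℝ} (hx : 0 < x) :
    besselJ (l + 1 / 2) x ^ 2 / x ≤
      (x / 2) ^ (2 * l) * exp ((x / 2) ^ 2) ^ 2 / Gamma (l + 3 / 2) ^ 2 := by
  have hx2 : 0 < x / 2 := by positivity
  have hJ : besselJ (l + 1 / 2) x ^ 2 ≤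
      ((x / 2) ^ ((l : ℝ) + 1 / 2) / Gamma (l + 3 / 2) * exp ((x / 2) ^ 2)) ^ 2 := by
    rw [← sq_abs, show (l : ℝ) + 3 / 2 = l + 1 / 2 + 1 by ring]
    exact pow_le_pow_left₀ (abs_nonneg _) (abs_besselJ_le (by positivity) hx) 2
  have hsq : ((x / 2) ^ ((l : ℝ) + 1 / 2)) ^ 2 = (x / 2) ^ (2 * l) * (x / 2) := by
    rw [← rpow_natCast, ← rpow_mul hx2.le, ← pow_succ, ← rpow_natCast]
    push_cast
    ring_nf
  calc besselJ (l + 1 / 2) x ^ 2 / x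
      ≤ ((x / 2) ^ ((l : ℝ) + 1 / 2) / Gamma (l + 3 / 2) * exp ((x / 2) ^ 2)) ^ 2 / x := by
        gcongr
    _ = (x / 2) ^ (2 * l) * exp ((x / 2) ^ 2) ^ 2 / Gamma (l + 3 / 2) ^ 2 / 2 := by
      rw [div_mul_eq_mul_div, div_pow, mul_pow, hsq]
      field_simp
    _ ≤ (x / 2) ^ (2 * l) * exp ((x / 2) ^ 2) ^ 2 / Gamma (l + 3 / 2) ^ 2 :=
      half_le_self (by positivity)

lemma besselInt_le {l : ℕ} (hl : l ≠ 0) {δ μ : ℝ} (hμ : μ ∈ Icc 0 δ) :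
    besselInt l μ ≤ (δ / 2) ^ (2 * l) * exp ((δ / 2) ^ 2) ^ 2 / Gamma (l + 3 / 2) ^ 2 := by
  obtain ⟨hμ0, hμδ⟩ := hμ
  rcases hμ0.eq_or_lt with rfl | hμ0
  · simp only [besselInt, if_pos, if_neg hl]
    positivity
  · rw [besselInt, if_neg hμ0.ne']
    have hδ : 0 < δ := hμ0.trans_le hμδ
    refine (besselJ_sq_div_le l hμ0).trans ?_
    gcongr

lemma besselInt_nonneg (l : ℕ) {μ : ℝ} (hμ : 0 ≤ μ) : 0 ≤ besselInt l μ := by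
  unfold besselInt
  split_ifs <;> positivity

lemma Cl0_le (G : Measure ℝ) [IsFiniteMeasure G] {δ : ℝ} (hsupp : G (Ioi δ) = 0) {l : ℕ}
    (hl : l ≠ 0) :
    Cl0 G l ≤ 2 * π ^ 2 * G.real univ *
      ((δ / 2) ^ (2 * l) * exp ((δ / 2) ^ 2) ^ 2 / Gamma (l + 3 / 2) ^ 2) := by
  set B := (δ / 2) ^ (2 * l) * exp ((δ / 2) ^ 2) ^ 2 / Gamma (l + 3 / 2) ^ 2
  have hmem : ∀ᵐ μ ∂G.restrict (Ici 0), μ ∈ Icc 0 δ := by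
    filter_upwards [ae_restrict_mem measurableSet_Ici,
      ae_restrict_of_ae (measure_eq_zero_iff_ae_notMem.mp hsupp)] with μ h0 hδ
    exact ⟨h0, not_lt.mp hδ⟩
  have hnorm : ∀ᵐ μ ∂G.restrict (Ici 0), ‖besselInt l μ‖ ≤ B := by
    filter_upwards [hmem] with μ hμ
    rw [norm_of_nonneg (besselInt_nonneg l hμ.1)]
    exact besselInt_le hl hμ
  have hB : 0 ≤ B := by
    have := (even_two_mul l).pow_nonneg (δ / 2)
    positivity
  calc Cl0 G l ≤ 2 * π ^ 2 * ‖∫ μ in Ici 0, besselInt l μ ∂G‖ := by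
        unfold Cl0
        gcongr
        exact le_norm_self _
    _ ≤ 2 * π ^ 2 * (B * G.real (Ici 0)) := by
        gcongr
        rw [← measureReal_restrict_apply_univ]
        exact norm_integral_le_of_norm_le_const hnorm
    _ = 2 * π ^ 2 * G.real (Ici 0) * B := by ring
    _ ≤ 2 * π ^ 2 * G.real univ * B := by
        gcongr
        exacts [measure_ne_top G _, subset_univ _]

lemma mul_Cl0_add_le (G : Measure ℝ) [IsFiniteMeasure G] {δ : ℝ} (hsupp : G (Ioi δ) = 0)
    {L : ℕ} (hL : 2 ≤ L) (k : ℕ) :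
    (2 * ((L + k : ℕ) : ℝ) + 1) * Cl0 G (L + k) ≤
      2 * π ^ 2 * G.real univ * exp ((δ / 2) ^ 2) ^ 2 *
        ((δ / 2) ^ (2 * L) / Gamma (L - 1 / 2) ^ 2) * (((δ / 2) ^ 2) ^ k / k !) := by
  have hx : (1 : ℝ) ≤ L - 1 / 2 := by
    have : (2 : ℝ) ≤ L := by exact_mod_cast hL
    linarith
  set x : ℝ := L - 1 / 2
  have hweight : 2 * ((L + k : ℕ) : ℝ) + 1 = 2 * (x + k + 1) := by push_cast; ring
  have hΓarg : ((L + k : ℕ) : ℝ) + 3 / 2 = x + k + 2 := by push_cast; ring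
  have hpow : (δ / 2) ^ (2 * (L + k)) = (δ / 2) ^ (2 * L) * ((δ / 2) ^ 2) ^ k := by
    rw [mul_add, pow_add, pow_mul, pow_mul]
  set K := 2 * π ^ 2 * G.real univ * exp ((δ / 2) ^ 2) ^ 2 *
    ((δ / 2) ^ (2 * L) * ((δ / 2) ^ 2) ^ k)
  have hK : 0 ≤ K := by
    have := (even_two_mul L).pow_nonneg (δ / 2)
    positivity
  calc (2 * ((L + k : ℕ) : ℝ) + 1) * Cl0 G (L + k)
      ≤ (2 * ((L + k : ℕ) : ℝ) + 1) * (2 * π ^ 2 * G.real univ * ((δ / 2) ^ (2 * (L + k)) *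
          exp ((δ / 2) ^ 2) ^ 2 / Gamma ((L + k : ℕ) + 3 / 2) ^ 2)) := by
        gcongr
        exact Cl0_le G hsupp (by omega)
    _ = K * (2 * (x + k + 1) / Gamma (x + k + 2) ^ 2) := by
        rw [hweight, hΓarg, hpow]
        ring
    _ ≤ K * (1 / (Gamma x ^ 2 * k !)) :=
        mul_le_mul_of_nonneg_left (Real.two_mul_div_Gamma_sq_le hx k) hK
    _ = _ := by ring

theorem tail_sum_bounded_support_decay_general
    (δ : ℝ)
    (G : MeasureTheory.Measure ℝ) [MeasureTheory.IsFiniteMeasure G]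
    (hsupp : G (Set.Ioi δ) = 0) :
    ∃ C : ℝ, 0 < C ∧
      ∀ L : ℕ, 2 ≤ L →
        ∑' l : ℕ, ENNReal.ofReal ((2 * ((L + l : ℕ) : ℝ) + 1) * Cl0 G (L + l))
          ≤ ENNReal.ofReal
              (C / Real.Gamma ((L : ℝ) - 1 / 2) ^ 2 * (δ / 2) ^ (2 * L)) := by
  set E := exp ((δ / 2) ^ 2)
  refine ⟨2 * π ^ 2 * G.real univ * E ^ 3 + 1, by positivity, fun L hL ↦ ?_⟩
  set D := (δ / 2) ^ (2 * L) / Gamma (L - 1 / 2) ^ 2 with hD_def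
  set A := 2 * π ^ 2 * G.real univ * E ^ 2 * D with hA_def
  have hD : 0 ≤ D := by
    have := (even_two_mul L).pow_nonneg (δ / 2)
    positivity
  have hsum : HasSum (fun k : ℕ ↦ A * (((δ / 2) ^ 2) ^ k / k !)) (A * E) :=
    (Real.hasSum_pow_div_factorial_exp _).mul_left A
  calc ∑' l : ℕ, ENNReal.ofReal ((2 * ((L + l : ℕ) : ℝ) + 1) * Cl0 G (L + l))
      ≤ ∑' k : ℕ, ENNReal.ofReal (A * (((δ / 2) ^ 2) ^ k / k !)) :=
        ENNReal.tsum_le_tsum fun k ↦ ENNReal.ofReal_le_ofReal (mul_Cl0_add_le G hsupp hL k)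
    _ = ENNReal.ofReal (A * E) := by
        rw [← ENNReal.ofReal_tsum_of_nonneg (fun k ↦ by positivity) hsum.summable, hsum.tsum_eq]
    _ ≤ ENNReal.ofReal ((2 * π ^ 2 * G.real univ * E ^ 3 + 1) * D) :=
        ENNReal.ofReal_le_ofReal (by rw [hA_def]; nlinarith)
    _ = _ := by rw [hD_def]; ring_nf

/-- If `G` has bounded support `[0,δ]` (`G((δ,∞)) = 0`), then there is
`C > 0` (depending only on `δ` and `G([0,δ])`) such that for every `L ≥ 2`,
`Σ_{l≥L}(2l+1)C_l ≤ (C/Γ(L−1/2)²)(δ/2)^{2L}` (stated in `ℝ≥0∞`). -/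
theorem tail_sum_bounded_support_decay
    (δ : ℝ) (hδ : 0 < δ)
    (G : MeasureTheory.Measure ℝ) [MeasureTheory.IsFiniteMeasure G]
    (hG0 : G (Set.Iio 0) = 0) (hsupp : G (Set.Ioi δ) = 0) :
    ∃ C : ℝ, 0 < C ∧
      ∀ L : ℕ, 2 ≤ L →
        ∑' l : ℕ, ENNReal.ofReal ((2 * ((L + l : ℕ) : ℝ) + 1) * Cl0 G (L + l))
          ≤ ENNReal.ofReal
              (C / Real.Gamma ((L : ℝ) - 1 / 2) ^ 2 * (δ / 2) ^ (2 * L)) :=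
  tail_sum_bounded_support_decay_general δ G hsupp
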